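/- Let (X,r) be a finite nondegenerate involutive square-free solution, and let a,b,x ∈ X with λ_a-orbit of x the cycle (x_1 x_2 ... x_k), x_1 = x, k ≥ 2. Suppose λ_{λ_b(a)} = λ_a and λ_{λ_a(b)} = λ_b on the connected component of x (the actions of a and b commute there). Then: (1) the λ_a-orbit of λ_b(x) also has length exactly k; (2) if λ_b(x) = x_{m+1} for some 1 ≤ m ≤ k−1, then λ_b acts on this orbit as the m-th power of λ_a, i.e. λ_b(x_i) = x_{i+m mod k}; (3) otherwise the λ_a-orbits of x and λ_b(x) are disjoint. -/

import Mathlib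

/-- The quadratic map `r(x,y) = (λ_x(y), ρ_y(x))`. -/
def ybMap {X : Type*} (lam rho : X → X → X) : X × X → X × X :=
  fun p => (lam p.1 p.2, rho p.2 p.1)

/-- `r¹² = r × id` on `X × X × X`. -/
def ybR12 {X : Type*} (lam rho : X → X → X) : X × X × X → X × X × X :=
  fun p => (lam p.1 p.2.1, rho p.2.1 p.1, p.2.2)

/-- `r²³ = id × r` on `X × X × X`. -/
def ybR23 {X : Type*} (lam rho : X → X → X) : X × X × X → X × X × X :=
  fun p => (p.1, lam p.2.1 p.2.2, rho p.2.2 p.2.1)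

/-- The braid (Yang–Baxter) relation `r¹²r²³r¹² = r²³r¹²r²³`. -/
def YbBraided {X : Type*} (lam rho : X → X → X) : Prop :=
  ybR12 lam rho ∘ ybR23 lam rho ∘ ybR12 lam rho
    = ybR23 lam rho ∘ ybR12 lam rho ∘ ybR23 lam rho

/-- `r` is involutive: `r ∘ r = id`. -/
def YbInvolutive {X : Type*} (lam rho : X → X → X) : Prop :=
  ∀ p, ybMap lam rho (ybMap lam rho p) = p

/-- Nondegeneracy: all `λ_x` and `ρ_x` are bijective. -/
def YbNondeg {X : Type*} (lam rho : X → X → X) : Prop :=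
  (∀ x, Function.Bijective (lam x)) ∧ (∀ x, Function.Bijective (rho x))

/-- Condition lri: `ρ_x(λ_x(y)) = y = λ_x(ρ_x(y))`. -/
def YbLri {X : Type*} (lam rho : X → X → X) : Prop :=
  ∀ x y, rho x (lam x y) = y ∧ lam x (rho x y) = y

/-- Square-free: `r(x,x) = (x,x)`. -/
def YbSquareFree {X : Type*} (lam rho : X → X → X) : Prop :=
  ∀ x, lam x x = x ∧ rho x x = x

/-- Connectedness in the graph `Γ(X,r)`. -/
def ybConn {X : Type*} (lam : X → X → X) : X → X → Prop :=
  Relation.EqvGen (fun u v => ∃ a, lam a u = v)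


/-!
The identity `λ_{λ_a(b)} ∘ λ_a = λ_{λ_b(a)} ∘ λ_b`, which holds in every square-free involutive
solution (condition l1 combined with lri and a cyclic condition), turns the hypothesis on the
component of `x` into `λ_b ∘ λ_a = λ_a ∘ λ_b` there. Since the component is `λ_a`-invariant,
`λ_b` commutes with every power of `λ_a` on the orbit of `x`; hence the injective map `λ_b`
carries the `λ_a`-cycle of `x` onto the `λ_a`-cycle of `λ_b(x)`, and all three claims follow.
-/

open Function

section Solution

variable {X : Type*} {lam rho : X → X → X}

theorem YbBraided.lam_lam_lam_rho (hbr : YbBraided lam rho) (x y z : X) :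
    lam (lam x y) (lam (rho y x) z) = lam x (lam y z) :=
  (Prod.mk.inj (congrFun hbr (x, y, z))).1

theorem YbBraided.rho_lam_lam_eq (hbr : YbBraided lam rho) (x y z : X) :
    rho (lam (rho y x) z) (lam x y) = lam (rho (lam y z) x) (rho z y) :=
  (Prod.mk.inj (Prod.mk.inj (congrFun hbr (x, y, z))).2).1

theorem YbInvolutive.lam_lam_rho (hinv : YbInvolutive lam rho) (x y : X) :
    lam (lam x y) (rho y x) = x :=
  (Prod.mk.inj (hinv (x, y))).1

theorem YbInvolutive.rho_rho_lam (hinv : YbInvolutive lam rho) (x y : X) :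
    rho (rho y x) (lam x y) = y :=
  (Prod.mk.inj (hinv (x, y))).2

theorem lam_rho_self_eq (hnd : YbNondeg lam rho) (hsf : YbSquareFree lam rho)
    (hbr : YbBraided lam rho) (x y : X) :
    lam (rho y x) y = lam x y := by
  have h := hbr.rho_lam_lam_eq x y y
  rw [(hsf y).1, (hsf y).2] at h
  refine ((hnd.2 (lam (rho y x) y)).injective ?_).symm
  rw [h, (hsf _).2]

theorem rho_lam_self_eq (hnd : YbNondeg lam rho) (hsf : YbSquareFree lam rho)
    (hbr : YbBraided lam rho) (y z : X) :
    rho (lam y z) y = rho z y := by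
  have h := hbr.rho_lam_lam_eq y y z
  rw [(hsf y).1, (hsf y).2] at h
  refine ((hnd.1 (rho (lam y z) y)).injective ?_).symm
  rw [← h, (hsf _).1]

theorem rho_lam_cancel (hnd : YbNondeg lam rho) (hinv : YbInvolutive lam rho)
    (hsf : YbSquareFree lam rho) (hbr : YbBraided lam rho) (x y : X) :
    rho x (lam x y) = y := by
  simpa only [hinv.lam_lam_rho, hinv.rho_rho_lam] using
    rho_lam_self_eq hnd hsf hbr (lam x y) (rho y x)

theorem lam_lam_self_eq (hnd : YbNondeg lam rho) (hinv : YbInvolutive lam rho)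
    (hsf : YbSquareFree lam rho) (hbr : YbBraided lam rho) (x y : X) :
    lam (lam x y) x = lam y x := by
  simpa only [rho_lam_cancel hnd hinv hsf hbr] using
    (lam_rho_self_eq hnd hsf hbr (lam x y) x).symm

theorem lam_lam_comp_lam (hnd : YbNondeg lam rho) (hinv : YbInvolutive lam rho)
    (hsf : YbSquareFree lam rho) (hbr : YbBraided lam rho) (a b z : X) :
    lam (lam a b) (lam a z) = lam (lam b a) (lam b z) := by
  rw [← hbr.lam_lam_lam_rho, lam_lam_self_eq hnd hinv hsf hbr, rho_lam_cancel hnd hinv hsf hbr]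

theorem ybConn_lam {x z : X} (c : X) (h : ybConn lam x z) : ybConn lam x (lam c z) :=
  h.trans _ _ _ (Relation.EqvGen.rel _ _ ⟨c, rfl⟩)

end Solution

section Dynamics

variable {α : Type*} {f g : α → α}

theorem iterate_map_comm_of_invariant {p : α → Prop} (hp : ∀ z, p z → p (f z))
    (hcomm : ∀ z, p z → g (f z) = f (g z)) {x : α} (hx : p x) (n : ℕ) :
    g (f^[n] x) = f^[n] (g x) := by
  induction n generalizing x with
  | zero => rfl
  | succ n ih => rw [iterate_succ_apply, iterate_succ_apply, ih (hp x hx), hcomm x hx]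

theorem exists_iterate_eq_of_iterate_eq_iterate (hf : Injective f) {k : ℕ} (hk : 0 < k)
    {x : α} (hx : IsPeriodicPt f k x) {y : α} {i j : ℕ} (h : f^[i] y = f^[j] x) :
    ∃ n, y = f^[n] x := by
  refine ⟨j + (k * i - i), hf.iterate i ?_⟩
  have hi : i ≤ k * i := Nat.le_mul_of_pos_left i hk
  rw [h, ← iterate_add_apply, show i + (j + (k * i - i)) = j + k * i by omega,
    iterate_add_apply, (hx.mul_const i).eq]

end Dynamics

theorem orbit_cycles_lemma_general {X : Type*} (lam rho : X → X → X)
    (hnd : YbNondeg lam rho) (hinv : YbInvolutive lam rho)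
    (hsf : YbSquareFree lam rho) (hbr : YbBraided lam rho)
    (a b x : X) (k : ℕ) (hk2 : 2 ≤ k)
    (hper : (lam a)^[k] x = x)
    (hmin : ∀ j, 0 < j → j < k → (lam a)^[j] x ≠ x)
    (hcomm : ∀ z, ybConn lam x z → lam (lam b a) z = lam a z ∧ lam (lam a b) z = lam b z) :
    ((lam a)^[k] (lam b x) = lam b x ∧
      ∀ j, 0 < j → j < k → (lam a)^[j] (lam b x) ≠ lam b x) ∧
    (∀ m, 1 ≤ m → m ≤ k - 1 → lam b x = (lam a)^[m] x →
      ∀ i, lam b ((lam a)^[i] x) = (lam a)^[i + m] x) ∧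
    ((∀ i, lam b x ≠ (lam a)^[i] x) →
      ∀ i j, (lam a)^[i] (lam b x) ≠ (lam a)^[j] x) := by
  have hba : ∀ z, ybConn lam x z → lam b (lam a z) = lam a (lam b z) := fun z hz =>
    calc lam b (lam a z) = lam (lam a b) (lam a z) := ((hcomm _ (ybConn_lam a hz)).2).symm
      _ = lam (lam b a) (lam b z) := lam_lam_comp_lam hnd hinv hsf hbr a b z
      _ = lam a (lam b z) := (hcomm _ (ybConn_lam b hz)).1
  have hiter : ∀ n, lam b ((lam a)^[n] x) = (lam a)^[n] (lam b x) :=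
    iterate_map_comm_of_invariant (fun _ => ybConn_lam a) hba (Relation.EqvGen.refl x)
  refine ⟨⟨by rw [← hiter, hper], fun j hj hjk h => hmin j hj hjk ?_⟩,
    fun m _ _ hm i => ?_, fun hnot i j h => ?_⟩
  · exact (hnd.1 b).injective (by rw [hiter, h])
  · rw [hiter, hm, ← iterate_add_apply]
  · obtain ⟨n, hn⟩ := exists_iterate_eq_of_iterate_eq_iterate (hnd.1 a).injective
      (by omega) hper h
    exact hnot n hn

/-- let `(X,r)` be a finite nondegenerate involutive square-free solution,
`a, b, x ∈ X`, with the `λ_a`-orbit of `x` a cycle of length `k ≥ 2`, `λ_b(x) ≠ x`, and the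
actions of `a` and `b` commuting on the component of `x`. Then: (1) the `λ_a`-orbit of
`λ_b(x)` also has length exactly `k`; (2) if `λ_b(x) = λ_a^m(x)` with `1 ≤ m ≤ k−1` then
`λ_b` acts on the orbit of `x` as the `m`-th power of `λ_a`; (3) if `λ_b(x)` is not in the
`λ_a`-orbit of `x`, then the two orbits are disjoint. -/
theorem orbit_cycles_lemma {X : Type*} [Finite X] (lam rho : X → X → X)
    (hnd : YbNondeg lam rho) (hinv : YbInvolutive lam rho)
    (hsf : YbSquareFree lam rho) (hbr : YbBraided lam rho)
    (a b x : X) (k : ℕ) (hk2 : 2 ≤ k)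
    (hper : (lam a)^[k] x = x)
    (hmin : ∀ j, 0 < j → j < k → (lam a)^[j] x ≠ x)
    (hbx : lam b x ≠ x)
    (hcomm : ∀ z, ybConn lam x z → lam (lam b a) z = lam a z ∧ lam (lam a b) z = lam b z) :
    ((lam a)^[k] (lam b x) = lam b x ∧
      ∀ j, 0 < j → j < k → (lam a)^[j] (lam b x) ≠ lam b x) ∧
    (∀ m, 1 ≤ m → m ≤ k - 1 → lam b x = (lam a)^[m] x →
      ∀ i, lam b ((lam a)^[i] x) = (lam a)^[i + m] x) ∧
    ((∀ i, lam b x ≠ (lam a)^[i] x) →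
      ∀ i j, (lam a)^[i] (lam b x) ≠ (lam a)^[j] x) :=
  orbit_cycles_lemma_general lam rho hnd hinv hsf hbr a b x k hk2 hper hmin hcomm
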